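/- For each integer d ≥ 2, the distortion of F_d in G_d is a polynomial of degree d, i.e. Dist_{G_d}^{F_d} ∼ n^d, where G_d = ⟨x₁, …, x_d, t | t x₁ t^{-1} = x₁, t x_i t^{-1} = x_i x_{i-1}^{-1} for 2 ≤ i ≤ d⟩ and F_d is the subgroup generated by x₁, …, x_d; moreover F_d is a normal finitely generated free subgroup with G_d/F_d infinite cyclic. -/

import Mathlib

/-- The word length of `g` with respect to a set `S` of letters. -/
noncomputable def wordLength {G : Type*} [Group G] (S : Set G) (g : G) : ℕ :=
  sInf {n | ∃ l : List G, l.length = n ∧ (∀ x ∈ l, x ∈ S ∨ x⁻¹ ∈ S) ∧ l.prod = g}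

/-- The distortion function: `Dist(r) = max { |h|_T : h ∈ H, |h|_S ≤ r }`. -/
noncomputable def distortion {G : Type*} [Group G] (S T : Set G) (H : Subgroup G)
    (r : ℕ) : ℕ :=
  sSup {n | ∃ h ∈ H, wordLength S h ≤ r ∧ wordLength T h = n}

/-- `f ⪯ g`. -/
def Dominated (f g : ℕ → ℕ) : Prop :=
  ∃ A B C D : ℕ, 0 < A ∧ 0 < B ∧ 0 < C ∧ ∀ x : ℕ, D < x → f x ≤ A * g (B * x) + C * x

/-- The generator `x_{i+1}` of the free group underlying the presentation of `G_d`. -/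
def gdX (d : ℕ) (i : Fin d) : FreeGroup (Fin d ⊕ Unit) := FreeGroup.of (Sum.inl i)

/-- The generator `t` of the free group underlying the presentation of `G_d`. -/
def gdT (d : ℕ) : FreeGroup (Fin d ⊕ Unit) := FreeGroup.of (Sum.inr ())

/-- The predecessor index. -/
def fpred {d : ℕ} (i : Fin d) : Fin d :=
  ⟨i.val - 1, lt_of_le_of_lt (Nat.sub_le _ _) i.isLt⟩

/-- The image of `x_i` under conjugation by `t`. -/
def gdTarget (d : ℕ) (i : Fin d) : FreeGroup (Fin d ⊕ Unit) :=
  if i.val = 0 then gdX d i else gdX d i * (gdX d (fpred i))⁻¹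

/-- The relators of `G_d`. -/
def gdRels (d : ℕ) : Set (FreeGroup (Fin d ⊕ Unit)) :=
  {r | ∃ i : Fin d, r = gdT d * gdX d i * (gdT d)⁻¹ * (gdTarget d i)⁻¹}

/-- The group `G_d = ⟨x₁, …, x_d, t ∣ t x₁ t⁻¹ = x₁, t x_i t⁻¹ = x_i x_{i-1}⁻¹⟩`. -/
abbrev GD (d : ℕ) := PresentedGroup (gdRels d)

/-- The image of a generator in `G_d`. -/
def gdGen (d : ℕ) (a : Fin d ⊕ Unit) : GD d := PresentedGroup.of a

/-- The image of the generator `x_{i+1}` in `G_d`. -/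
def gdx (d : ℕ) (i : Fin d) : GD d := PresentedGroup.of (Sum.inl i)

/-- The subgroup `F_d` of `G_d` generated by `x₁, …, x_d`. -/
def FD (d : ℕ) : Subgroup (GD d) := Subgroup.closure (Set.range (gdx d))

/-- `f ∼ g`. -/
def FEquiv (f g : ℕ → ℕ) : Prop := Dominated f g ∧ Dominated g f

/-- The natural homomorphism from the free group on `x₁, …, x_d` to `G_d`. -/
def xlift (d : ℕ) : FreeGroup (Fin d) →* GD d := FreeGroup.lift (gdx d)

/-!
`G_d` is the semidirect product `F_d ⋊ ℤ` in which `t` acts by the automorphism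
`φ : x₁ ↦ x₁, x_i ↦ x_i x_{i-1}⁻¹`; this model shows that `F_d` is free and is the kernel of the
exponent sum of `t`. The length of `φ^{±k}(x_i)` in `F_d` is at most `(k + 1)^{i-1}`. A word of
length `r` in `G_d` representing an element of `F_d` is a product of at most `r` conjugates
`t^m x_i^{±1} t^{-m}` with `|m| ≤ r`, whence `Dist(r) ≤ r^d`. Conversely
`(x_d t)^n t^{-n} = x_d φ(x_d) ⋯ φ^{n-1}(x_d)` has length at most `3n` in `G_d`, while its exponent
sum in `x₁` is `±C(n, d)`, a lower bound for its length in `F_d`.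
-/

section WordLength

variable {G H : Type*} [Group G] [Group H] {S : Set G} {g a b : G}

open Subgroup

lemma wordLength_le_length (l : List G) (hl : ∀ x ∈ l, x ∈ S ∨ x⁻¹ ∈ S) :
    wordLength S l.prod ≤ l.length :=
  Nat.sInf_le ⟨l, rfl, hl, rfl⟩

lemma exists_list_length_eq_wordLength (hg : g ∈ closure S) :
    ∃ l : List G, l.length = wordLength S g ∧ (∀ x ∈ l, x ∈ S ∨ x⁻¹ ∈ S) ∧ l.prod = g := by
  rw [← mem_toSubmonoid, closure_toSubmonoid] at hg
  obtain ⟨l, hl, rfl⟩ := Submonoid.exists_list_of_mem_closure hg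
  exact Nat.sInf_mem (s := {n | ∃ l' : List G, l'.length = n ∧ _ ∧ l'.prod = l.prod})
    ⟨l.length, l, rfl, hl, rfl⟩

lemma forall_mem_reverse_map_inv {l : List G} (hl : ∀ x ∈ l, x ∈ S ∨ x⁻¹ ∈ S) :
    ∀ x ∈ (l.map (·⁻¹)).reverse, x ∈ S ∨ x⁻¹ ∈ S := by
  simp only [List.mem_reverse, List.mem_map, forall_exists_index, and_imp,
    forall_apply_eq_imp_iff₂, inv_inv]
  exact fun x hx => (hl x hx).symm

lemma wordLength_one : wordLength S (1 : G) = 0 :=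
  Nat.le_zero.1 (wordLength_le_length [] (by simp))

lemma wordLength_le_one (ha : a ∈ S) : wordLength S a ≤ 1 := by
  simpa using wordLength_le_length [a] (by simpa using Or.inl ha)

lemma wordLength_mul_le (ha : a ∈ closure S) (hb : b ∈ closure S) :
    wordLength S (a * b) ≤ wordLength S a + wordLength S b := by
  obtain ⟨l₁, hl₁, h₁, rfl⟩ := exists_list_length_eq_wordLength ha
  obtain ⟨l₂, hl₂, h₂, rfl⟩ := exists_list_length_eq_wordLength hb
  rw [← hl₁, ← hl₂, ← List.length_append, ← List.prod_append]
  exact wordLength_le_length _ fun x hx => (List.mem_append.1 hx).elim (h₁ x) (h₂ x)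

lemma wordLength_inv_le (ha : a ∈ closure S) : wordLength S a⁻¹ ≤ wordLength S a := by
  obtain ⟨l, hl, h, rfl⟩ := exists_list_length_eq_wordLength ha
  rw [← hl, List.prod_inv_reverse]
  simpa using wordLength_le_length _ (forall_mem_reverse_map_inv h)

lemma wordLength_pow_le (ha : a ∈ closure S) (n : ℕ) :
    wordLength S (a ^ n) ≤ n * wordLength S a := by
  induction n with
  | zero => simp [wordLength_one]
  | succ n ih =>
    calc wordLength S (a ^ (n + 1)) ≤ wordLength S (a ^ n) + wordLength S a :=
          pow_succ a n ▸ wordLength_mul_le (pow_mem ha n) ha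
      _ ≤ (n + 1) * wordLength S a := by rw [add_one_mul]; gcongr

lemma le_mul_wordLength (N : G → ℕ) (C : ℕ) (h_one : N 1 = 0)
    (h_mul : ∀ a b, N (a * b) ≤ N a + N b) (h_inv : ∀ a, N a⁻¹ ≤ N a)
    (hS : ∀ s ∈ S, N s ≤ C) (hg : g ∈ closure S) : N g ≤ C * wordLength S g := by
  obtain ⟨l, hlen, hl, rfl⟩ := exists_list_length_eq_wordLength hg
  rw [← hlen]
  clear hlen hg
  induction l with
  | nil => simp [h_one]
  | cons a l ih =>
    have ha : N a ≤ C := (hl a List.mem_cons_self).elim (hS a) fun h => by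
      simpa using (h_inv a⁻¹).trans (hS _ h)
    calc N (a :: l).prod ≤ N a + N l.prod := h_mul _ _
      _ ≤ C + C * l.length := add_le_add ha (ih fun x hx => hl x (List.mem_cons_of_mem a hx))
      _ = C * (a :: l).length := by simp [mul_add, add_comm]

lemma wordLength_map_le_mul (f : G →* H) {T : Set H} {C : ℕ} (hf : f.range ≤ closure T)
    (hS : ∀ s ∈ S, wordLength T (f s) ≤ C) (hg : g ∈ closure S) :
    wordLength T (f g) ≤ C * wordLength S g := by
  have hT : ∀ x, f x ∈ closure T := fun x => hf ⟨x, rfl⟩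
  refine le_mul_wordLength (wordLength T ∘ f) C (by simp [wordLength_one]) (fun a b => ?_)
    (fun a => ?_) hS hg
  · simpa using wordLength_mul_le (hT a) (hT b)
  · simpa using wordLength_inv_le (hT a)

lemma wordLength_le_image_of_injective {f : G →* H} (hf : Function.Injective f)
    (hg : f g ∈ closure (f '' S)) : wordLength S g ≤ wordLength (f '' S) (f g) := by
  obtain ⟨l, hlen, hl, hprod⟩ := exists_list_length_eq_wordLength hg
  have hpre : ∀ x ∈ l, ∃ s ∈ S, x = f s ∨ x = f s⁻¹ := by
    intro x hx
    rcases hl x hx with ⟨s, hs, rfl⟩ | ⟨s, hs, hsx⟩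
    · exact ⟨s, hs, Or.inl rfl⟩
    · exact ⟨s, hs, Or.inr (by rw [map_inv, hsx, inv_inv])⟩
  have hsec : ∀ x ∈ l, f (Function.invFun f x) = x := by
    intro x hx
    obtain ⟨s, -, rfl | rfl⟩ := hpre x hx <;> exact Function.invFun_eq ⟨_, rfl⟩
  have hmap : (l.map (Function.invFun f)).prod = g := by
    apply hf
    rw [← hprod, map_list_prod, List.map_map]
    exact congrArg List.prod (List.map_congr_left hsec |>.trans (List.map_id l))
  rw [← hlen, ← hmap, ← List.length_map (f := Function.invFun f)]
  refine wordLength_le_length _ fun y hy => ?_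
  obtain ⟨x, hx, rfl⟩ := List.mem_map.1 hy
  obtain ⟨s, hs, rfl | rfl⟩ := hpre x hx
  · exact Or.inl (by rwa [Function.leftInverse_invFun hf])
  · exact Or.inr (by rwa [Function.leftInverse_invFun hf, inv_inv])

lemma natAbs_le_wordLength (χ : G →* Multiplicative ℤ) (hS : ∀ s ∈ S, (χ s).toAdd.natAbs ≤ 1)
    (hg : g ∈ closure S) : (χ g).toAdd.natAbs ≤ wordLength S g := by
  simpa using le_mul_wordLength (fun x => (χ x).toAdd.natAbs) 1 (by simp)
    (fun a b => by simpa using Int.natAbs_add_le _ _) (fun a => by simp) hS hg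

end WordLength

section Distortion

variable {G : Type*} [Group G] {S T : Set G} {H : Subgroup G} {r B : ℕ}

lemma distortion_le (h : ∀ g ∈ H, wordLength S g ≤ r → wordLength T g ≤ B) :
    distortion S T H r ≤ B :=
  csSup_le' fun _ ⟨g, hg, hr, hn⟩ => hn ▸ h g hg hr

lemma le_distortion (h : ∀ g ∈ H, wordLength S g ≤ r → wordLength T g ≤ B) {g : G}
    (hg : g ∈ H) (hr : wordLength S g ≤ r) : wordLength T g ≤ distortion S T H r :=
  le_csSup ⟨B, fun _ ⟨g, hg, hr, hn⟩ => hn ▸ h g hg hr⟩ ⟨g, hg, hr, rfl⟩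

lemma wordLength_mul_pow_mul_inv_pow_le {a b : G} (ha : a ∈ S) (hb : b ∈ S) (n : ℕ) :
    wordLength S ((a * b) ^ n * (b ^ n)⁻¹) ≤ 3 * n := by
  have ha' := Subgroup.subset_closure (k := S) ha
  have hb' := Subgroup.subset_closure (k := S) hb
  have hab : wordLength S (a * b) ≤ 2 :=
    (wordLength_mul_le ha' hb').trans (add_le_add (wordLength_le_one ha) (wordLength_le_one hb))
  calc _ ≤ wordLength S ((a * b) ^ n) + wordLength S (b ^ n) :=
        (wordLength_mul_le (pow_mem (mul_mem ha' hb') n) (inv_mem (pow_mem hb' n))).trans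
          (add_le_add le_rfl (wordLength_inv_le (pow_mem hb' n)))
    _ ≤ n * 2 + n * 1 := add_le_add ((wordLength_pow_le (mul_mem ha' hb') n).trans
          (Nat.mul_le_mul_left n hab)) ((wordLength_pow_le hb' n).trans
          (Nat.mul_le_mul_left n (wordLength_le_one hb)))
    _ = 3 * n := by ring

end Distortion

lemma add_pow_le_succ_pow (k j : ℕ) : (k + 1) ^ (j + 1) + (k + 2) ^ j ≤ (k + 2) ^ (j + 1) := by
  have : (k + 1) ^ j ≤ (k + 2) ^ j := Nat.pow_le_pow_left (by omega) j
  rw [pow_succ', pow_succ']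
  nlinarith

lemma pow_add_succ_pow_pred_le {d : ℕ} (hd : 1 ≤ d) (n : ℕ) :
    n ^ d + (n + 1) ^ (d - 1) ≤ (n + 1) ^ d := by
  obtain ⟨e, rfl⟩ : ∃ e, d = e + 1 := ⟨d - 1, by omega⟩
  have : n ^ e ≤ (n + 1) ^ e := Nat.pow_le_pow_left (by omega) e
  rw [Nat.add_sub_cancel, pow_succ, pow_succ]
  nlinarith

lemma pow_le_two_mul_pow_mul_choose {d n : ℕ} (hn : 2 * d ≤ n) :
    n ^ d ≤ (2 * d) ^ d * n.choose d := by
  have h := Nat.pow_sub_le_descFactorial n d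
  rw [Nat.descFactorial_eq_factorial_mul_choose] at h
  calc n ^ d ≤ (2 * (n + 1 - d)) ^ d := Nat.pow_le_pow_left (by omega) d
    _ = 2 ^ d * (n + 1 - d) ^ d := mul_pow 2 _ d
    _ ≤ 2 ^ d * (d ^ d * n.choose d) := Nat.mul_le_mul_left _
          (h.trans (Nat.mul_le_mul_right _ (Nat.factorial_le_pow d)))
    _ = (2 * d) ^ d * n.choose d := by ring

section FreeGroupShift

variable {d : ℕ}

lemma FreeGroup.mem_closure_range_of {α : Type*} (w : FreeGroup α) :
    w ∈ Subgroup.closure (Set.range FreeGroup.of) := by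
  rw [FreeGroup.closure_range_of]
  trivial

def phiImage (d : ℕ) (i : Fin d) : FreeGroup (Fin d) :=
  if i.val = 0 then .of i else .of i * (.of (fpred i))⁻¹

def phi (d : ℕ) : FreeGroup (Fin d) →* FreeGroup (Fin d) := FreeGroup.lift (phiImage d)

/-- The product of the first `k` generators in decreasing order; `descProd d (i + 1)` is the
image of the `i`-th generator under the inverse of `phi d`. -/
def descProd (d : ℕ) : ℕ → FreeGroup (Fin d)
  | 0 => 1
  | k + 1 => (if h : k < d then .of ⟨k, h⟩ else 1) * descProd d k

def psi (d : ℕ) : FreeGroup (Fin d) →* FreeGroup (Fin d) :=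
  FreeGroup.lift fun i => descProd d (i.val + 1)

lemma phi_of (i : Fin d) : phi d (.of i) = phiImage d i := FreeGroup.lift_apply_of

lemma descProd_succ {k : ℕ} (h : k < d) : descProd d (k + 1) = .of ⟨k, h⟩ * descProd d k := by
  simp [descProd, h]

lemma psi_of (i : Fin d) : psi d (.of i) = descProd d (i.val + 1) := FreeGroup.lift_apply_of

lemma psi_of_zero (h : 0 < d) : psi d (.of ⟨0, h⟩) = .of ⟨0, h⟩ := by
  simp [psi_of, descProd, h]

lemma psi_of_succ {j : ℕ} (h : j + 1 < d) :
    psi d (.of ⟨j + 1, h⟩) = .of ⟨j + 1, h⟩ * psi d (.of ⟨j, by omega⟩) := by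
  rw [psi_of, psi_of, descProd_succ h]

lemma phi_descProd_succ : ∀ (k : ℕ) (h : k < d), phi d (descProd d (k + 1)) = .of ⟨k, h⟩
  | 0, h => by simp [descProd, h, phi_of, phiImage]
  | k + 1, h => by
    rw [descProd_succ h, map_mul, phi_descProd_succ k (by omega), phi_of, phiImage,
      if_neg (by simp)]
    simp [fpred]

lemma phi_comp_psi : (phi d).comp (psi d) = MonoidHom.id _ :=
  FreeGroup.ext_hom _ _ fun i => by simp [psi_of, phi_descProd_succ i.val i.isLt]

lemma psi_comp_phi : (psi d).comp (phi d) = MonoidHom.id _ := by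
  refine FreeGroup.ext_hom _ _ fun ⟨i, h⟩ => ?_
  cases i with
  | zero => simp [phi_of, phiImage, psi_of_zero]
  | succ j =>
    have hp : fpred ⟨j + 1, h⟩ = ⟨j, by omega⟩ := rfl
    simp [phi_of, phiImage, hp, psi_of_succ]

def phiAut (d : ℕ) : MulAut (FreeGroup (Fin d)) :=
  MonoidHom.toMulEquiv (phi d) (psi d) psi_comp_phi phi_comp_psi

lemma phiAut_apply (w : FreeGroup (Fin d)) : phiAut d w = phi d w := rfl

lemma phiAut_pow_succ_apply (k : ℕ) (w : FreeGroup (Fin d)) :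
    (phiAut d ^ (k + 1)) w = (phiAut d ^ k) (phi d w) := by
  rw [pow_succ, MulAut.mul_apply]; rfl

lemma phiAut_inv_pow_succ_apply (k : ℕ) (w : FreeGroup (Fin d)) :
    ((phiAut d)⁻¹ ^ (k + 1)) w = ((phiAut d)⁻¹ ^ k) (psi d w) := by
  rw [pow_succ, MulAut.mul_apply]; rfl

lemma wordLength_phiAut_pow_of (k : ℕ) (i : Fin d) :
    wordLength (Set.range FreeGroup.of) ((phiAut d ^ k) (.of i)) ≤ (k + 1) ^ i.val := by
  induction k generalizing i with
  | zero => simpa using wordLength_le_one (Set.mem_range_self i)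
  | succ k ih =>
    rw [phiAut_pow_succ_apply, phi_of, phiImage]
    split_ifs with h0
    · exact (ih i).trans (Nat.pow_le_pow_left (by omega) _)
    · obtain ⟨j, hj⟩ : ∃ j, i.val = j + 1 := ⟨i.val - 1, by omega⟩
      have hp : (fpred i).val = j := by simp [fpred, hj]
      rw [map_mul, map_inv, hj]
      calc _ ≤ _ + _ := wordLength_mul_le (FreeGroup.mem_closure_range_of _)
            (FreeGroup.mem_closure_range_of _)
        _ ≤ (k + 1) ^ (j + 1) + (k + 2) ^ j := add_le_add (hj ▸ ih i)
            ((wordLength_inv_le (FreeGroup.mem_closure_range_of _)).trans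
              ((hp ▸ ih (fpred i)).trans (Nat.pow_le_pow_left (by omega) _)))
        _ ≤ (k + 2) ^ (j + 1) := add_pow_le_succ_pow k j

lemma wordLength_phiAut_inv_pow_of (k j : ℕ) (h : j < d) :
    wordLength (Set.range FreeGroup.of) (((phiAut d)⁻¹ ^ k) (.of ⟨j, h⟩)) ≤ (k + 1) ^ j := by
  induction k generalizing j with
  | zero => simpa using wordLength_le_one (Set.mem_range_self _)
  | succ k ihk =>
    induction j with
    | zero =>
      rw [phiAut_inv_pow_succ_apply, psi_of_zero h]
      exact (ihk 0 h).trans (by simp)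
    | succ j ihj =>
      rw [phiAut_inv_pow_succ_apply, psi_of_succ h, map_mul, ← phiAut_inv_pow_succ_apply]
      calc _ ≤ _ + _ := wordLength_mul_le (FreeGroup.mem_closure_range_of _)
            (FreeGroup.mem_closure_range_of _)
        _ ≤ (k + 1) ^ (j + 1) + (k + 2) ^ j := add_le_add (ihk _ h) (ihj _)
        _ ≤ (k + 2) ^ (j + 1) := add_pow_le_succ_pow k j

lemma wordLength_phiAut_zpow_of (m : ℤ) (i : Fin d) :
    wordLength (Set.range FreeGroup.of) ((phiAut d ^ m) (.of i)) ≤ (m.natAbs + 1) ^ (d - 1) := by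
  have hi : i.val ≤ d - 1 := by omega
  obtain ⟨n, rfl | rfl⟩ := Int.eq_nat_or_neg m
  · rw [zpow_natCast, Int.natAbs_natCast]
    exact (wordLength_phiAut_pow_of n i).trans (Nat.pow_le_pow_right (by omega) hi)
  · rw [zpow_neg, zpow_natCast, ← inv_pow, Int.natAbs_neg, Int.natAbs_natCast]
    exact (wordLength_phiAut_inv_pow_of n i.val i.isLt).trans (Nat.pow_le_pow_right (by omega) hi)

lemma wordLength_phiAut_zpow_le (m : ℤ) (w : FreeGroup (Fin d)) :
    wordLength (Set.range FreeGroup.of) ((phiAut d ^ m) w)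
      ≤ (m.natAbs + 1) ^ (d - 1) * wordLength (Set.range FreeGroup.of) w := by
  refine wordLength_map_le_mul (phiAut d ^ m).toMonoidHom
    (fun _ _ => FreeGroup.mem_closure_range_of _) ?_ (FreeGroup.mem_closure_range_of w)
  rintro _ ⟨i, rfl⟩
  exact wordLength_phiAut_zpow_of m i

/-- The exponent sum of the generator `x_{j+1}`; it vanishes identically when `d ≤ j`. -/
def expSum (d j : ℕ) : FreeGroup (Fin d) →* Multiplicative ℤ :=
  FreeGroup.lift fun i => if i.val = j then .ofAdd 1 else 1

lemma expSum_of (j : ℕ) (i : Fin d) :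
    expSum d j (.of i) = if i.val = j then .ofAdd 1 else 1 := FreeGroup.lift_apply_of

lemma expSum_self_eq_one : expSum d d = 1 :=
  FreeGroup.ext_hom _ _ fun i => by simp [expSum_of, i.isLt.ne]

lemma expSum_phi (j : ℕ) (w : FreeGroup (Fin d)) :
    expSum d j (phi d w) = expSum d j w / expSum d (j + 1) w := by
  suffices (expSum d j).comp (phi d) = expSum d j / expSum d (j + 1) from
    DFunLike.congr_fun this w
  refine FreeGroup.ext_hom _ _ fun i => ?_
  simp only [MonoidHom.comp_apply, phi_of, phiImage, MonoidHom.div_apply, expSum_of]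
  split_ifs <;> simp_all [expSum_of, fpred] <;> omega

lemma natAbs_expSum_le_wordLength (j : ℕ) (w : FreeGroup (Fin d)) :
    (expSum d j w).toAdd.natAbs ≤ wordLength (Set.range FreeGroup.of) w := by
  refine natAbs_le_wordLength _ ?_ (FreeGroup.mem_closure_range_of w)
  rintro _ ⟨i, rfl⟩
  rw [expSum_of]
  split_ifs <;> simp

/-- `phiOrbitProd a n = a · φ(a) ⋯ φⁿ⁻¹(a)`. -/
def phiOrbitProd (a : FreeGroup (Fin d)) : ℕ → FreeGroup (Fin d)
  | 0 => 1
  | n + 1 => a * phi d (phiOrbitProd a n)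

/-- `phi` acts on exponent sums by `c_j ↦ c_j - c_{j+1}`, which produces signed binomial
coefficients. -/
lemma expSum_phiOrbitProd {i : Fin d} (hi : i.val + 1 = d) (n : ℕ) :
    ∀ j m, j + m = i.val →
      (expSum d j (phiOrbitProd (.of i) n)).toAdd = (-1) ^ m * n.choose (m + 1) := by
  induction n with
  | zero => simp [phiOrbitProd]
  | succ n ih =>
    intro j m hjm
    simp only [phiOrbitProd, map_mul, expSum_phi, toAdd_mul, toAdd_div, expSum_of]
    cases m with
    | zero =>
      rw [show j + 1 = d by omega, expSum_self_eq_one, ih j 0 hjm]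
      simp [show i.val = j by omega]
      ring
    | succ m =>
      rw [ih j (m + 1) hjm, ih (j + 1) m (by omega), if_neg (by omega), toAdd_one,
        Nat.choose_succ_succ' n]
      push_cast
      ring

lemma choose_le_wordLength_phiOrbitProd {i : Fin d} (hi : i.val + 1 = d) (n : ℕ) :
    n.choose d ≤ wordLength (Set.range FreeGroup.of) (phiOrbitProd (.of i) n) := by
  have h := natAbs_expSum_le_wordLength 0 (phiOrbitProd (.of i) n)
  rwa [expSum_phiOrbitProd hi n 0 i.val (zero_add _), Int.natAbs_mul, Int.natAbs_pow,
    Int.natAbs_neg, Int.natAbs_one, one_pow, one_mul, Int.natAbs_natCast, hi] at h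

end FreeGroupShift

section GD

variable {d : ℕ}

open SemidirectProduct

def gdt (d : ℕ) : GD d := gdGen d (Sum.inr ())

abbrev FreeByCyclic (d : ℕ) :=
  FreeGroup (Fin d) ⋊[zpowersHom (MulAut (FreeGroup (Fin d))) (phiAut d)] Multiplicative ℤ

lemma gdTarget_eq_map (i : Fin d) : gdTarget d i = FreeGroup.map Sum.inl (phiImage d i) := by
  unfold gdTarget phiImage
  split_ifs <;> simp [gdX]

lemma lift_map_inl {G : Type*} [Group G] (f : Fin d ⊕ Unit → G) (w : FreeGroup (Fin d)) :
    FreeGroup.lift f (FreeGroup.map Sum.inl w) = FreeGroup.lift (f ∘ Sum.inl) w :=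
  DFunLike.congr_fun (FreeGroup.ext_hom ((FreeGroup.lift f).comp (FreeGroup.map Sum.inl))
    (FreeGroup.lift (f ∘ Sum.inl)) fun i => by simp) w

lemma lift_freeByCyclic_gdRels : ∀ r ∈ gdRels d,
    FreeGroup.lift (Sum.elim (fun i => inl (.of i)) fun _ => inr (.ofAdd 1) :
      Fin d ⊕ Unit → FreeByCyclic d) r = 1 := by
  rintro _ ⟨i, rfl⟩
  have hconj : (inr (.ofAdd 1) * inl (.of i) * (inr (.ofAdd 1))⁻¹ : FreeByCyclic d) =
      inl (phiImage d i) := by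
    rw [← map_inv, ← inl_aut, zpowersHom_apply, toAdd_ofAdd, zpow_one, phiAut_apply, phi_of]
  rw [map_mul, map_inv, mul_inv_eq_one, gdTarget_eq_map, lift_map_inl]
  simpa [gdT, gdX, ← FreeGroup.lift_unique (f := fun i => (inl (.of i) : FreeByCyclic d)) inl
    fun _ => rfl] using hconj

def toFreeByCyclic (d : ℕ) : GD d →* FreeByCyclic d :=
  PresentedGroup.toGroup lift_freeByCyclic_gdRels

lemma toFreeByCyclic_gdx (i : Fin d) : toFreeByCyclic d (gdx d i) = inl (.of i) :=
  PresentedGroup.toGroup.of lift_freeByCyclic_gdRels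

lemma toFreeByCyclic_gdt : toFreeByCyclic d (gdt d) = inr (.ofAdd 1) :=
  PresentedGroup.toGroup.of lift_freeByCyclic_gdRels

lemma xlift_of (i : Fin d) : xlift d (.of i) = gdx d i := FreeGroup.lift_apply_of

lemma toFreeByCyclic_xlift (w : FreeGroup (Fin d)) : toFreeByCyclic d (xlift d w) = inl w :=
  DFunLike.congr_fun (FreeGroup.ext_hom ((toFreeByCyclic d).comp (xlift d)) inl fun i => by
    simp [xlift_of, toFreeByCyclic_gdx]) w

lemma xlift_injective : Function.Injective (xlift d) :=
  .of_comp (f := toFreeByCyclic d) (by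
    simpa [Function.comp_def, toFreeByCyclic_xlift] using inl_injective)

lemma range_xlift : (xlift d).range = FD d := by
  rw [xlift, FreeGroup.range_lift_eq_closure]
  rfl

lemma xlift_mem_FD (w : FreeGroup (Fin d)) : xlift d w ∈ FD d := range_xlift ▸ ⟨w, rfl⟩

lemma image_xlift_range_of : xlift d '' Set.range FreeGroup.of = Set.range (gdx d) := by
  rw [← Set.range_comp]
  exact congrArg Set.range (funext xlift_of)

lemma mk_map_inl (w : FreeGroup (Fin d)) :
    PresentedGroup.mk (gdRels d) (FreeGroup.map Sum.inl w) = xlift d w :=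
  DFunLike.congr_fun (FreeGroup.ext_hom ((PresentedGroup.mk _).comp (FreeGroup.map Sum.inl))
    (xlift d) fun i => by simp [xlift_of]; rfl) w

lemma xlift_phi (w : FreeGroup (Fin d)) :
    xlift d (phi d w) = gdt d * xlift d w * (gdt d)⁻¹ := by
  have hgen (i : Fin d) : gdt d * gdx d i * (gdt d)⁻¹ = xlift d (phiImage d i) := by
    have h := PresentedGroup.mk_eq_mk_of_mul_inv_mem (rels := gdRels d) ⟨i, rfl⟩
    rw [gdTarget_eq_map, map_mul, map_mul, map_inv] at h
    exact h.trans (mk_map_inl _)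
  refine DFunLike.congr_fun (FreeGroup.ext_hom ((xlift d).comp (phi d))
    ((MulAut.conj (gdt d)).toMonoidHom.comp (xlift d)) fun i => ?_) w
  simp [phi_of, xlift_of, hgen]

lemma xlift_phiAut_zpow (m : ℤ) (w : FreeGroup (Fin d)) :
    xlift d ((phiAut d ^ m) w) = gdt d ^ m * xlift d w * (gdt d ^ m)⁻¹ := by
  induction m using Int.induction_on generalizing w with
  | zero => simp
  | succ k ih =>
    rw [zpow_add_one, MulAut.mul_apply, ih, phiAut_apply, xlift_phi]
    group
  | pred k ih =>
    have h := xlift_phi ((phiAut d)⁻¹ w)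
    rw [← phiAut_apply, MulAut.apply_inv_self] at h
    have h' : xlift d ((phiAut d)⁻¹ w) = (gdt d)⁻¹ * xlift d w * gdt d := by
      rw [h]
      group
    rw [zpow_sub_one, MulAut.mul_apply, ih, h']
    group

def ofFreeByCyclic (d : ℕ) : FreeByCyclic d →* GD d :=
  SemidirectProduct.lift (xlift d) (zpowersHom _ (gdt d)) fun m =>
    MonoidHom.ext fun w => by
      simp only [MonoidHom.comp_apply, MulEquiv.coe_toMonoidHom, zpowersHom_apply,
        MulAut.conj_apply, xlift_phiAut_zpow]

lemma ofFreeByCyclic_toFreeByCyclic (g : GD d) : ofFreeByCyclic d (toFreeByCyclic d g) = g := by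
  refine DFunLike.congr_fun (PresentedGroup.ext (φ := (ofFreeByCyclic d).comp (toFreeByCyclic d))
    (ψ := .id _) fun a => ?_) g
  rcases a with i | ⟨⟩
  · simp [show PresentedGroup.of (Sum.inl i) = gdx d i from rfl, toFreeByCyclic_gdx,
      ofFreeByCyclic, xlift_of]
  · simp [show PresentedGroup.of (Sum.inr ()) = gdt d from rfl, toFreeByCyclic_gdt,
      ofFreeByCyclic]

lemma xlift_left_toFreeByCyclic {g : GD d} (hg : (toFreeByCyclic d g).right = 1) :
    xlift d (toFreeByCyclic d g).left = g := by
  conv_rhs =>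
    rw [← ofFreeByCyclic_toFreeByCyclic g, ← inl_left_mul_inr_right (toFreeByCyclic d g), hg]
  simp [ofFreeByCyclic]

def tExponent (d : ℕ) : GD d →* Multiplicative ℤ := rightHom.comp (toFreeByCyclic d)

lemma ker_tExponent : (tExponent d).ker = FD d := by
  refine le_antisymm (fun g hg => ?_) ((Subgroup.closure_le _).2 ?_)
  · exact xlift_left_toFreeByCyclic hg ▸ xlift_mem_FD _
  · rintro _ ⟨i, rfl⟩
    simp [tExponent, toFreeByCyclic_gdx]

lemma tExponent_surjective : Function.Surjective (tExponent d) := fun m =>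
  ⟨gdt d ^ m.toAdd, by
    rw [tExponent, MonoidHom.comp_apply, map_zpow, map_zpow, toFreeByCyclic_gdt, rightHom_inr,
      ← ofAdd_zsmul, smul_eq_mul, mul_one, ofAdd_toAdd]⟩

end GD

section DistortionGD

variable {d : ℕ}

open SemidirectProduct

/-- Appending a letter to a product of `n` letters conjugates the letter's `F_d`-part by `t ^ m`
with `|m| ≤ n`, which multiplies its length by at most `(n + 1) ^ (d - 1)`. -/
lemma wordLength_left_list_prod_le (hd : 1 ≤ d) (l : List (FreeByCyclic d))
    (hl : ∀ q ∈ l, wordLength (Set.range FreeGroup.of) q.left ≤ 1 ∧ q.right.toAdd.natAbs ≤ 1) :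
    l.prod.right.toAdd.natAbs ≤ l.length ∧
      wordLength (Set.range FreeGroup.of) l.prod.left ≤ l.length ^ d := by
  induction l using List.reverseRecOn with
  | nil => simp [wordLength_one]
  | append_singleton l q ih =>
    obtain ⟨ihr, ihl⟩ := ih fun x hx => hl x (List.mem_append_left _ hx)
    obtain ⟨hql, hqr⟩ := hl q (by simp)
    simp only [List.prod_append, List.prod_singleton, mul_right, mul_left, toAdd_mul,
      List.length_append, List.length_singleton, zpowersHom_apply]
    refine ⟨(Int.natAbs_add_le _ _).trans (by omega), ?_⟩
    calc _ ≤ l.length ^ d + (l.prod.right.toAdd.natAbs + 1) ^ (d - 1) * 1 :=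
          (wordLength_mul_le (FreeGroup.mem_closure_range_of _)
            (FreeGroup.mem_closure_range_of _)).trans
          (add_le_add ihl ((wordLength_phiAut_zpow_le _ _).trans (Nat.mul_le_mul_left _ hql)))
      _ ≤ l.length ^ d + (l.length + 1) ^ (d - 1) := by
          rw [mul_one]; gcongr
      _ ≤ (l.length + 1) ^ d := pow_add_succ_pow_pred_le hd _

lemma toFreeByCyclic_generator_bound {a : GD d}
    (ha : a ∈ Set.range (gdGen d) ∨ a⁻¹ ∈ Set.range (gdGen d)) :
    wordLength (Set.range FreeGroup.of) (toFreeByCyclic d a).left ≤ 1 ∧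
      (toFreeByCyclic d a).right.toAdd.natAbs ≤ 1 := by
  have hof (i : Fin d) : wordLength (Set.range FreeGroup.of) (FreeGroup.of i) ≤ 1 :=
    wordLength_le_one (Set.mem_range_self i)
  rcases ha with ⟨i | u, rfl⟩ | ⟨i | u, ha⟩
  · simpa [show gdGen d (.inl i) = gdx d i from rfl, toFreeByCyclic_gdx] using hof i
  · simp [show gdGen d (.inr u) = gdt d from rfl, toFreeByCyclic_gdt, wordLength_one]
  · rw [← inv_inv a, ← ha]
    simpa [show gdGen d (.inl i) = gdx d i from rfl, toFreeByCyclic_gdx] using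
      (wordLength_inv_le (FreeGroup.mem_closure_range_of _)).trans (hof i)
  · rw [← inv_inv a, ← ha]
    simp [show gdGen d (.inr u) = gdt d from rfl, toFreeByCyclic_gdt, wordLength_one]

lemma wordLength_le_pow_of_mem_FD (hd : 1 ≤ d) {g : GD d} (hg : g ∈ FD d) {r : ℕ}
    (hr : wordLength (Set.range (gdGen d)) g ≤ r) : wordLength (Set.range (gdx d)) g ≤ r ^ d := by
  obtain ⟨l, hlen, hl, rfl⟩ := exists_list_length_eq_wordLength
    (PresentedGroup.closure_range_of (gdRels d) ▸ Subgroup.mem_top g)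
  have hright : (toFreeByCyclic d l.prod).right = 1 := (ker_tExponent (d := d) ▸ hg :)
  have hleft := (wordLength_left_list_prod_le hd (l.map (toFreeByCyclic d))
    (by simpa using fun a ha => toFreeByCyclic_generator_bound (hl a ha))).2
  rw [← map_list_prod, List.length_map, hlen] at hleft
  calc _ = wordLength (xlift d '' Set.range FreeGroup.of)
          (xlift d (toFreeByCyclic d l.prod).left) := by
        rw [xlift_left_toFreeByCyclic hright, image_xlift_range_of]
    _ ≤ 1 * wordLength (Set.range FreeGroup.of) (toFreeByCyclic d l.prod).left :=
        wordLength_map_le_mul _ (by rw [range_xlift, image_xlift_range_of]; rfl)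
          (fun s hs => wordLength_le_one (Set.mem_image_of_mem _ hs))
          (FreeGroup.mem_closure_range_of _)
    _ ≤ r ^ d := by rw [one_mul]; exact hleft.trans (Nat.pow_le_pow_left hr d)

lemma xlift_phiOrbitProd_mul_pow (a : FreeGroup (Fin d)) (n : ℕ) :
    xlift d (phiOrbitProd a n) * gdt d ^ n = (xlift d a * gdt d) ^ n := by
  induction n with
  | zero => simp [phiOrbitProd]
  | succ n ih =>
    rw [phiOrbitProd, map_mul, xlift_phi, pow_succ', pow_succ', ← ih]
    group

lemma distortion_le_pow (hd : 1 ≤ d) (r : ℕ) :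
    distortion (Set.range (gdGen d)) (Set.range (gdx d)) (FD d) r ≤ r ^ d :=
  distortion_le fun _ hg hr => wordLength_le_pow_of_mem_FD hd hg hr

lemma choose_le_distortion (hd : 1 ≤ d) (n : ℕ) :
    n.choose d ≤ distortion (Set.range (gdGen d)) (Set.range (gdx d)) (FD d) (3 * n) := by
  obtain ⟨top, htop⟩ : ∃ top : Fin d, top.val + 1 = d := ⟨⟨d - 1, by omega⟩, by simp; omega⟩
  have hx : gdx d top ∈ Set.range (gdGen d) := ⟨.inl top, rfl⟩
  have ht : gdt d ∈ Set.range (gdGen d) := ⟨.inr (), rfl⟩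
  have hg : xlift d (phiOrbitProd (.of top) n) = (gdx d top * gdt d) ^ n * (gdt d ^ n)⁻¹ := by
    rw [← xlift_of, ← xlift_phiOrbitProd_mul_pow, mul_inv_cancel_right]
  calc n.choose d ≤ wordLength (Set.range FreeGroup.of) (phiOrbitProd (.of top) n) :=
        choose_le_wordLength_phiOrbitProd htop n
    _ ≤ wordLength (xlift d '' Set.range FreeGroup.of) (xlift d (phiOrbitProd (.of top) n)) :=
        wordLength_le_image_of_injective xlift_injective
          (by rw [image_xlift_range_of]; exact xlift_mem_FD _)
    _ ≤ _ := by
        rw [image_xlift_range_of]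
        refine le_distortion (fun _ hg hr => wordLength_le_pow_of_mem_FD hd hg hr)
          (xlift_mem_FD _) ?_
        rw [hg]
        exact wordLength_mul_pow_mul_inv_pow_le hx ht n

end DistortionGD

theorem stmt13 (d : ℕ) (hd : 2 ≤ d) :
    -- the distortion of `F_d` in `G_d` is a polynomial of degree `d`
    FEquiv (distortion (Set.range (gdGen d)) (Set.range (gdx d)) (FD d))
      (fun n => n ^ d) ∧
    -- moreover `F_d` is a normal finitely generated free subgroup
    (FD d).Normal ∧ (FD d).FG ∧
    Function.Injective (xlift d) ∧ (xlift d).range = FD d ∧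
    -- with `G_d / F_d` infinite cyclic
    ∃ ψ : GD d →* Multiplicative ℤ, Function.Surjective ψ ∧ ψ.ker = FD d := by
  have hd1 : 1 ≤ d := by omega
  refine ⟨⟨⟨1, 1, 1, 0, one_pos, one_pos, one_pos, fun x _ => ?_⟩,
      ⟨(2 * d) ^ d, 3, 1, 2 * d, by positivity, by norm_num, one_pos, fun x hx => ?_⟩⟩,
    ker_tExponent ▸ (tExponent d).normal_ker, (Subgroup.fg_iff _).2 ⟨_, rfl, Set.finite_range _⟩,
    xlift_injective, range_xlift, tExponent d, tExponent_surjective, ker_tExponent⟩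
  · simpa using (distortion_le_pow hd1 x).trans (Nat.le_add_right _ x)
  · calc x ^ d ≤ (2 * d) ^ d * x.choose d := pow_le_two_mul_pow_mul_choose hx.le
      _ ≤ (2 * d) ^ d * distortion _ _ _ (3 * x) :=
          Nat.mul_le_mul_left _ (choose_le_distortion hd1 x)
      _ ≤ _ := Nat.le_add_right _ _
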